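/- Let M and K be skew-symmetric real d×d matrices, let S : ℝ^d × ℝ → ℝ be continuously differentiable in its first argument (gradient ∇_z S), let D be a skew-symmetric real N×N matrix, let x_0, …, x_{N−1} ∈ ℝ, and let z_j : ℝ → ℝ^d (j = 0, …, N−1) be differentiable functions satisfying the semi-discrete system M z_j'(t) + K Σ_{k=0}^{N−1} D_{jk} z_k(t) = ∇_z S(z_j(t), x_j) for all t and all j. Then for every j and every t, (d/dt) E_j(t) + Σ_{k=0}^{N−1} D_{jk} F_{jk}(t) = 0, where E_j(t) = S(z_j(t), x_j) − (1/2) z_j(t)ᵀ K Σ_{k=0}^{N−1} D_{jk} z_k(t) and F_{jk}(t) = (1/2) z_k(t)ᵀ K z_j'(t) + (1/2) z_j(t)ᵀ K z_k'(t). -/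

import Mathlib

/-!
Write `v = z_j'`, `w = ∑ₖ D_{jk} z_k`, `w' = ∑ₖ D_{jk} z_k'` and `g = ∇_z S(z_j, x_j) = M v + K w`.
By the chain rule `E_j' = g ⬝ v - ½ (v ⬝ K w + z_j ⬝ K w')`, while linearity gives
`∑ₖ D_{jk} F_{jk} = ½ (w ⬝ K v + z_j ⬝ K w')`. Skew-symmetry of `M` kills `(M v) ⬝ v`, and
skew-symmetry of `K` turns `(K w) ⬝ v` into `v ⬝ K w = -(w ⬝ K v)`, so everything cancels.
-/

open scoped Matrix

noncomputable def dotCLM {d : ℕ} (g : Fin d → ℝ) : (Fin d → ℝ) →L[ℝ] ℝ :=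
  ∑ i : Fin d, g i • (ContinuousLinearMap.proj i : (Fin d → ℝ) →L[ℝ] ℝ)

open Matrix

lemma dotCLM_apply {d : ℕ} (g v : Fin d → ℝ) : dotCLM g v = g ⬝ᵥ v := by
  simp [dotCLM, dotProduct]

section SkewSymmetric

variable {n R : Type*} [Fintype n] [CommRing R] {A : Matrix n n R}

theorem Matrix.dotProduct_mulVec_comm_of_transpose_eq_neg (hA : Aᵀ = -A) (a b : n → R) :
    a ⬝ᵥ A *ᵥ b = -(b ⬝ᵥ A *ᵥ a) := by
  rw [dotProduct_mulVec, dotProduct_comm, ← mulVec_transpose, hA, neg_mulVec, dotProduct_neg]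

theorem Matrix.dotProduct_mulVec_self_of_transpose_eq_neg [NoZeroDivisors R] [CharZero R]
    (hA : Aᵀ = -A) (a : n → R) : a ⬝ᵥ A *ᵥ a = 0 :=
  CharZero.eq_neg_self_iff.mp (dotProduct_mulVec_comm_of_transpose_eq_neg hA a a)

end SkewSymmetric

theorem HasDerivAt.dotProduct_mulVec {𝕜 n : Type*} [NontriviallyNormedField 𝕜] [Fintype n]
    (A : Matrix n n 𝕜) {a b : 𝕜 → n → 𝕜} {a' b' : n → 𝕜} {t : 𝕜}
    (ha : HasDerivAt a a' t) (hb : HasDerivAt b b' t) :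
    HasDerivAt (fun s ↦ a s ⬝ᵥ A *ᵥ b s) (a' ⬝ᵥ A *ᵥ b t + a t ⬝ᵥ A *ᵥ b') t := by
  simp only [dotProduct, mulVec, ← Finset.sum_add_distrib]
  exact HasDerivAt.fun_sum fun i _ ↦ (hasDerivAt_pi.mp ha i).mul
    (HasDerivAt.fun_sum fun k _ ↦ (hasDerivAt_pi.mp hb k).const_mul (A i k))

theorem energy_flux_balance {n R : Type*} [Fintype n] [Field R] [CharZero R]
    {M K : Matrix n n R} (hM : Mᵀ = -M) (hK : Kᵀ = -K) {u v w w' g : n → R}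
    (hg : M *ᵥ v + K *ᵥ w = g) :
    (g ⬝ᵥ v - 1 / 2 * (v ⬝ᵥ K *ᵥ w + u ⬝ᵥ K *ᵥ w'))
      + (1 / 2 * (w ⬝ᵥ K *ᵥ v) + 1 / 2 * (u ⬝ᵥ K *ᵥ w')) = 0 := by
  have hMv : M *ᵥ v ⬝ᵥ v = 0 := by
    rw [dotProduct_comm, dotProduct_mulVec_self_of_transpose_eq_neg hM]
  have hKw : K *ᵥ w ⬝ᵥ v = -(w ⬝ᵥ K *ᵥ v) := by
    rw [dotProduct_comm, dotProduct_mulVec_comm_of_transpose_eq_neg hK]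
  rw [← hg, add_dotProduct, hMv, hKw, dotProduct_comm v, hKw]
  ring

theorem stmt2_general {d N : ℕ} (M K : Matrix (Fin d) (Fin d) ℝ)
    (hM : Mᵀ = -M) (hK : Kᵀ = -K)
    (S : (Fin d → ℝ) → ℝ → ℝ) (gradS : (Fin d → ℝ) → ℝ → (Fin d → ℝ))
    (hS : ∀ (x : ℝ) (w : Fin d → ℝ), HasFDerivAt (fun w' => S w' x) (dotCLM (gradS w x)) w)
    (D : Matrix (Fin N) (Fin N) ℝ)
    (x : Fin N → ℝ)
    (z : Fin N → ℝ → (Fin d → ℝ)) (hdiff : ∀ j, Differentiable ℝ (z j))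
    (hode : ∀ (t : ℝ) (j : Fin N),
      M.mulVec (deriv (z j) t) + K.mulVec (∑ k, D j k • z k t) = gradS (z j t) (x j))
    (E : Fin N → ℝ → ℝ) (F : Fin N → Fin N → ℝ → ℝ)
    (hE : ∀ j t, E j t = S (z j t) (x j)
        - (1/2) * dotProduct (z j t) (K.mulVec (∑ k, D j k • z k t)))
    (hF : ∀ j k t, F j k t = (1/2) * dotProduct (z k t) (K.mulVec (deriv (z j) t))
        + (1/2) * dotProduct (z j t) (K.mulVec (deriv (z k) t))) :
    ∀ (j : Fin N) (t : ℝ), deriv (E j) t + ∑ k, D j k * F j k t = 0 := by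
  intro j t
  have hz : ∀ k, HasDerivAt (z k) (deriv (z k) t) t := fun k ↦ (hdiff k t).hasDerivAt
  have hcoupling : HasDerivAt (fun s ↦ ∑ k, D j k • z k s) (∑ k, D j k • deriv (z k) t) t :=
    HasDerivAt.fun_sum fun k _ ↦ (hz k).const_smul (D j k)
  have hS_comp : HasDerivAt (fun s ↦ S (z j s) (x j))
      (gradS (z j t) (x j) ⬝ᵥ deriv (z j) t) t := by
    have h := (hS (x j) (z j t)).comp_hasDerivAt t (hz j)
    rwa [dotCLM_apply] at h
  have hE_deriv : HasDerivAt (E j) (gradS (z j t) (x j) ⬝ᵥ deriv (z j) t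
      - 1 / 2 * (deriv (z j) t ⬝ᵥ K *ᵥ ∑ k, D j k • z k t
        + z j t ⬝ᵥ K *ᵥ ∑ k, D j k • deriv (z k) t)) t := by
    rw [show E j = _ from funext (hE j)]
    exact hS_comp.sub (((hz j).dotProduct_mulVec K hcoupling).const_mul (1 / 2))
  have hflux : ∑ k, D j k * F j k t
      = 1 / 2 * ((∑ k, D j k • z k t) ⬝ᵥ K *ᵥ deriv (z j) t)
        + 1 / 2 * (z j t ⬝ᵥ K *ᵥ ∑ k, D j k • deriv (z k) t) := by
    simp only [hF, mulVec_sum, mulVec_smul, sum_dotProduct, dotProduct_sum, smul_dotProduct,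
      dotProduct_smul, smul_eq_mul, Finset.mul_sum, mul_add, Finset.sum_add_distrib, mul_left_comm]
  rw [hE_deriv.deriv, hflux]
  exact energy_flux_balance hM hK (hode t j)

theorem stmt2 {d N : ℕ} (M K : Matrix (Fin d) (Fin d) ℝ)
    (hM : Mᵀ = -M) (hK : Kᵀ = -K)
    (S : (Fin d → ℝ) → ℝ → ℝ) (gradS : (Fin d → ℝ) → ℝ → (Fin d → ℝ))
    (hS : ∀ (x : ℝ) (w : Fin d → ℝ), HasFDerivAt (fun w' => S w' x) (dotCLM (gradS w x)) w)
    (hSc : ∀ x : ℝ, Continuous fun w => gradS w x)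
    (D : Matrix (Fin N) (Fin N) ℝ) (hD : Dᵀ = -D)
    (x : Fin N → ℝ)
    (z : Fin N → ℝ → (Fin d → ℝ)) (hdiff : ∀ j, Differentiable ℝ (z j))
    (hode : ∀ (t : ℝ) (j : Fin N),
      M.mulVec (deriv (z j) t) + K.mulVec (∑ k, D j k • z k t) = gradS (z j t) (x j))
    (E : Fin N → ℝ → ℝ) (F : Fin N → Fin N → ℝ → ℝ)
    (hE : ∀ j t, E j t = S (z j t) (x j)
        - (1/2) * dotProduct (z j t) (K.mulVec (∑ k, D j k • z k t)))
    (hF : ∀ j k t, F j k t = (1/2) * dotProduct (z k t) (K.mulVec (deriv (z j) t))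
        + (1/2) * dotProduct (z j t) (K.mulVec (deriv (z k) t))) :
    ∀ (j : Fin N) (t : ℝ), deriv (E j) t + ∑ k, D j k * F j k t = 0 :=
  stmt2_general M K hM hK S gradS hS D x z hdiff hode E F hE hF
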